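/- Let W = {x in the closed ball of radius r : Ψⁿ(x) lies in the closed ball of radius r for all n ≥ 0}. If x, y ∈ W satisfy ‖x₁ − y₁‖_Q ≥ ‖x₂ − y₂‖_Q, then for every n ≥ 1 one has ‖P₁(Ψⁿ(x) − Ψⁿ(y))‖_Q ≥ (λ − 2ε)ⁿ ‖x₁ − y₁‖_Q. -/
import Mathlib


/-- The `Q`-norm `‖x‖_Q = √(Q x x)` associated to a bilinear form `Q`. -/
noncomputable def normQ {E : Type*} [AddCommGroup E] [Module ℝ E]
    (Q : E →ₗ[ℝ] E →ₗ[ℝ] ℝ) (x : E) : ℝ :=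
  Real.sqrt (Q x x)

lemma normQ_nonneg' {E : Type*} [AddCommGroup E] [Module ℝ E]
    (Q : E →ₗ[ℝ] E →ₗ[ℝ] ℝ) (x : E) : 0 ≤ normQ Q x := Real.sqrt_nonneg _

lemma normQ_cs {E : Type*} [AddCommGroup E] [Module ℝ E]
    (Q : E →ₗ[ℝ] E →ₗ[ℝ] ℝ) (hQsymm : ∀ x y, Q x y = Q y x)
    (hnn : ∀ x, 0 ≤ Q x x) (x y : E) :
    |Q x y| ≤ normQ Q x * normQ Q y := by
  have h : ∀ t : ℝ, 0 ≤ Q y y * (t * t) + (2 * Q x y) * t + Q x x := by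
    intro t
    have h0 := hnn (x + t • y)
    have expand : Q (x + t • y) (x + t • y)
        = Q y y * (t * t) + (2 * Q x y) * t + Q x x := by
      simp only [map_add, map_smul, LinearMap.add_apply, LinearMap.smul_apply,
        smul_eq_mul]
      rw [hQsymm y x]; ring
    linarith [expand ▸ h0]
  have hd := discrim_le_zero h
  rw [discrim] at hd
  have h2 : Q x y ^ 2 ≤ Q x x * Q y y := by nlinarith
  calc |Q x y| = Real.sqrt (Q x y ^ 2) := (Real.sqrt_sq_eq_abs _).symm
    _ ≤ Real.sqrt (Q x x * Q y y) := Real.sqrt_le_sqrt h2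
    _ = normQ Q x * normQ Q y := Real.sqrt_mul (hnn x) _

lemma normQ_add_le {E : Type*} [AddCommGroup E] [Module ℝ E]
    (Q : E →ₗ[ℝ] E →ₗ[ℝ] ℝ) (hQsymm : ∀ x y, Q x y = Q y x)
    (hnn : ∀ x, 0 ≤ Q x x) (x y : E) :
    normQ Q (x + y) ≤ normQ Q x + normQ Q y := by
  have hcs := normQ_cs Q hQsymm hnn x y
  have hx : normQ Q x ^ 2 = Q x x := Real.sq_sqrt (hnn x)
  have hy : normQ Q y ^ 2 = Q y y := Real.sq_sqrt (hnn y)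
  have h1 : Q (x + y) (x + y) = Q x x + 2 * Q x y + Q y y := by
    simp only [map_add, LinearMap.add_apply]
    rw [hQsymm y x]; ring
  have h2 : Q (x + y) (x + y) ≤ (normQ Q x + normQ Q y) ^ 2 := by
    have := le_abs_self (Q x y)
    nlinarith
  calc normQ Q (x + y) = Real.sqrt (Q (x + y) (x + y)) := rfl
    _ ≤ Real.sqrt ((normQ Q x + normQ Q y) ^ 2) := Real.sqrt_le_sqrt h2
    _ = normQ Q x + normQ Q y := Real.sqrt_sq
        (add_nonneg (normQ_nonneg' Q x) (normQ_nonneg' Q y))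

lemma normQ_neg {E : Type*} [AddCommGroup E] [Module ℝ E]
    (Q : E →ₗ[ℝ] E →ₗ[ℝ] ℝ) (x : E) : normQ Q (-x) = normQ Q x := by
  unfold normQ; simp

/-- Let `W = {x in the closed ball of radius r : Ψⁿ x stays in the closed
ball for all n ≥ 0}`. If `x, y ∈ W` satisfy `‖x₁ − y₁‖_Q ≥ ‖x₂ − y₂‖_Q`, then for every
`n ≥ 1` one has `‖P₁(Ψⁿ x − Ψⁿ y)‖_Q ≥ (λ − 2ε)ⁿ ‖x₁ − y₁‖_Q`. -/
theorem stmt5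
 {E : Type*} [NormedAddCommGroup E] [NormedSpace ℝ E] [CompleteSpace E]
    -- Q is a bounded symmetric positive definite bilinear form on E
    (Q : E →ₗ[ℝ] E →ₗ[ℝ] ℝ)
    (hQsymm : ∀ x y : E, Q x y = Q y x)
    (hQpos : ∀ x : E, x ≠ 0 → 0 < Q x x)
    (C_Q : ℝ) (hCQpos : 0 < C_Q)
    (hQbd : ∀ x y : E, |Q x y| ≤ C_Q * ‖x‖ * ‖y‖)
    -- E = E₁ ⊕ E₂ is a splitting into Q-orthogonal subspaces, with projections P₁, P₂
    (E₁ E₂ : Submodule ℝ E)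
    (hinf : E₁ ⊓ E₂ = ⊥) (hsup : E₁ ⊔ E₂ = ⊤)
    (horth : ∀ a ∈ E₁, ∀ b ∈ E₂, Q a b = 0)
    (P₁ P₂ : E →ₗ[ℝ] E)
    (hP₁mem : ∀ x : E, P₁ x ∈ E₁) (hP₂mem : ∀ x : E, P₂ x ∈ E₂)
    (hPsum : ∀ x : E, P₁ x + P₂ x = x)
    -- T is a bounded linear map preserving the splitting, expanding on E₁, contracting on E₂
    (T : E →L[ℝ] E)
    (hT₁ : ∀ x ∈ E₁, T x ∈ E₁) (hT₂ : ∀ x ∈ E₂, T x ∈ E₂)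
    (lam mu : ℝ) (hlam : 1 < lam) (hmu0 : 0 < mu) (hmulam : mu < lam)
    (hTexp : ∀ x ∈ E₁, lam * normQ Q x ≤ normQ Q (T x))
    (hTcon : ∀ x ∈ E₂, normQ Q (T x) ≤ mu * normQ Q x)
    -- Ψ is continuous with Ψ 0 = 0
    (Ψ : E → E) (hΨcont : Continuous Ψ) (hΨ0 : Ψ 0 = 0)
    -- ε and r
    (ε : ℝ) (hε : 0 < ε) (hε1 : 1 < lam - 2 * ε)
    (hε2 : 1 < (lam - 2 * ε) / (mu + 2 * ε))
    (r : ℝ) (hr : 0 < r)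
    (hLip : ∀ x y : E, ‖x‖ ≤ r → ‖y‖ ≤ r →
      normQ Q ((Ψ x - T x) - (Ψ y - T y)) ≤ ε * normQ Q (x - y)) :
    ∀ x y : E,
      (∀ n : ℕ, ‖Ψ^[n] x‖ ≤ r) → (∀ n : ℕ, ‖Ψ^[n] y‖ ≤ r) →
      normQ Q (P₂ x - P₂ y) ≤ normQ Q (P₁ x - P₁ y) →
      ∀ n : ℕ, 1 ≤ n →
        (lam - 2 * ε) ^ n * normQ Q (P₁ x - P₁ y) ≤
          normQ Q (P₁ (Ψ^[n] x - Ψ^[n] y)) := by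
  -- basic facts
  have hnn : ∀ z : E, 0 ≤ Q z z := by
    intro z
    by_cases h : z = 0
    · simp [h]
    · exact (hQpos z h).le
  have hQnn := normQ_nonneg' Q
  have htri := normQ_add_le Q hQsymm hnn
  have htri_sub : ∀ a b : E, normQ Q (a - b) ≤ normQ Q a + normQ Q b := by
    intro a b
    calc normQ Q (a - b) = normQ Q (a + -b) := by rw [sub_eq_add_neg]
      _ ≤ normQ Q a + normQ Q (-b) := htri a (-b)
      _ = normQ Q a + normQ Q b := by rw [normQ_neg]
  have hcpos : (0:ℝ) < lam - 2 * ε := lt_trans one_pos hε1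
  have hmuε : mu + 2 * ε ≤ lam - 2 * ε := by
    have hpos : (0:ℝ) < mu + 2 * ε := by linarith
    have := (one_lt_div hpos).mp hε2
    linarith
  -- orthogonal decomposition of Q
  have hdecomp : ∀ z : E, Q z z = Q (P₁ z) (P₁ z) + Q (P₂ z) (P₂ z) := by
    intro z
    conv_lhs => rw [← hPsum z]
    have h12 : Q (P₁ z) (P₂ z) = 0 := horth _ (hP₁mem z) _ (hP₂mem z)
    have h21 : Q (P₂ z) (P₁ z) = 0 := by rw [hQsymm]; exact h12
    simp only [map_add, LinearMap.add_apply, h12, h21]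
    ring
  have hP1le : ∀ z : E, normQ Q (P₁ z) ≤ normQ Q z := by
    intro z
    exact Real.sqrt_le_sqrt (by linarith [hdecomp z, hnn (P₂ z)])
  have hP2le : ∀ z : E, normQ Q (P₂ z) ≤ normQ Q z := by
    intro z
    exact Real.sqrt_le_sqrt (by linarith [hdecomp z, hnn (P₁ z)])
  -- uniqueness of the decomposition
  have huniq : ∀ a ∈ E₁, ∀ b ∈ E₂, P₁ (a + b) = a ∧ P₂ (a + b) = b := by
    intro a ha b hb
    have hsum := hPsum (a + b)
    have h1 : P₁ (a + b) - a ∈ E₁ := E₁.sub_mem (hP₁mem _) ha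
    have h2 : P₁ (a + b) - a ∈ E₂ := by
      have heq : P₁ (a + b) - a = b - P₂ (a + b) := by
        rw [sub_eq_sub_iff_add_eq_add, hsum]
        abel
      rw [heq]
      exact E₂.sub_mem hb (hP₂mem _)
    have hmem : P₁ (a + b) - a ∈ E₁ ⊓ E₂ := Submodule.mem_inf.mpr ⟨h1, h2⟩
    rw [hinf, Submodule.mem_bot] at hmem
    have hP1 : P₁ (a + b) = a := sub_eq_zero.mp hmem
    refine ⟨hP1, ?_⟩
    rw [hP1] at hsum
    exact add_left_cancel hsum
  have hTcomm₁ : ∀ z : E, P₁ (T z) = T (P₁ z) := by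
    intro z
    have h : (T z : E) = T (P₁ z) + T (P₂ z) := by
      rw [← map_add, hPsum]
    rw [h]
    exact (huniq _ (hT₁ _ (hP₁mem z)) _ (hT₂ _ (hP₂mem z))).1
  have hTcomm₂ : ∀ z : E, P₂ (T z) = T (P₂ z) := by
    intro z
    have h : (T z : E) = T (P₁ z) + T (P₂ z) := by
      rw [← map_add, hPsum]
    rw [h]
    exact (huniq _ (hT₁ _ (hP₁mem z)) _ (hT₂ _ (hP₂mem z))).2
  -- one-step estimate
  have step : ∀ u v : E, ‖u‖ ≤ r → ‖v‖ ≤ r →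
      normQ Q (P₂ u - P₂ v) ≤ normQ Q (P₁ u - P₁ v) →
      ((lam - 2 * ε) * normQ Q (P₁ u - P₁ v) ≤ normQ Q (P₁ (Ψ u) - P₁ (Ψ v)) ∧
        normQ Q (P₂ (Ψ u) - P₂ (Ψ v)) ≤ normQ Q (P₁ (Ψ u) - P₁ (Ψ v))) := by
    intro u v hu hv hcone
    set D : E := (Ψ u - T u) - (Ψ v - T v) with hDdef
    have hD : normQ Q D ≤ ε * normQ Q (u - v) := hLip u v hu hv
    have hsplit : Ψ u - Ψ v = T (u - v) + D := by
      rw [hDdef, map_sub]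
      abel
    have hz1 : P₁ u - P₁ v = P₁ (u - v) := (map_sub P₁ u v).symm
    have hz2 : P₂ u - P₂ v = P₂ (u - v) := (map_sub P₂ u v).symm
    rw [hz1, hz2] at hcone
    rw [hz1]
    -- bound on normQ (u - v)
    have hz : normQ Q (u - v) ≤ 2 * normQ Q (P₁ (u - v)) := by
      have h1 : normQ Q (u - v) ≤ normQ Q (P₁ (u - v)) + normQ Q (P₂ (u - v)) := by
        conv_lhs => rw [← hPsum (u - v)]
        exact htri _ _
      linarith
    have hDbd : normQ Q D ≤ 2 * ε * normQ Q (P₁ (u - v)) := by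
      calc normQ Q D ≤ ε * normQ Q (u - v) := hD
        _ ≤ ε * (2 * normQ Q (P₁ (u - v))) := by
            exact mul_le_mul_of_nonneg_left hz hε.le
        _ = 2 * ε * normQ Q (P₁ (u - v)) := by ring
    -- decompose P₁ (Ψ u - Ψ v)
    have hP1eq : P₁ (Ψ u) - P₁ (Ψ v) = T (P₁ (u - v)) + P₁ D := by
      rw [← map_sub P₁, hsplit, map_add, hTcomm₁]
    have hP2eq : P₂ (Ψ u) - P₂ (Ψ v) = T (P₂ (u - v)) + P₂ D := by
      rw [← map_sub P₂, hsplit, map_add, hTcomm₂]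
    have hP1D : normQ Q (P₁ D) ≤ 2 * ε * normQ Q (P₁ (u - v)) :=
      le_trans (hP1le D) hDbd
    have hP2D : normQ Q (P₂ D) ≤ 2 * ε * normQ Q (P₁ (u - v)) :=
      le_trans (hP2le D) hDbd
    have hlow : (lam - 2 * ε) * normQ Q (P₁ (u - v)) ≤
        normQ Q (P₁ (Ψ u) - P₁ (Ψ v)) := by
      have hT : lam * normQ Q (P₁ (u - v)) ≤ normQ Q (T (P₁ (u - v))) :=
        hTexp _ (hP₁mem _)
      have hrev : normQ Q (T (P₁ (u - v))) ≤
          normQ Q (P₁ (Ψ u) - P₁ (Ψ v)) + normQ Q (P₁ D) := by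
        have heq : T (P₁ (u - v)) = (P₁ (Ψ u) - P₁ (Ψ v)) - P₁ D := by
          rw [hP1eq]; abel
        rw [heq]
        exact htri_sub _ _
      linarith
    refine ⟨hlow, ?_⟩
    have hup : normQ Q (P₂ (Ψ u) - P₂ (Ψ v)) ≤
        (mu + 2 * ε) * normQ Q (P₁ (u - v)) := by
      have hT2 : normQ Q (T (P₂ (u - v))) ≤ mu * normQ Q (P₂ (u - v)) :=
        hTcon _ (hP₂mem _)
      have h1 : normQ Q (P₂ (Ψ u) - P₂ (Ψ v)) ≤
          normQ Q (T (P₂ (u - v))) + normQ Q (P₂ D) := by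
        rw [hP2eq]; exact htri _ _
      have h2 : mu * normQ Q (P₂ (u - v)) ≤ mu * normQ Q (P₁ (u - v)) :=
        mul_le_mul_of_nonneg_left hcone hmu0.le
      linarith
    calc normQ Q (P₂ (Ψ u) - P₂ (Ψ v)) ≤ (mu + 2 * ε) * normQ Q (P₁ (u - v)) := hup
      _ ≤ (lam - 2 * ε) * normQ Q (P₁ (u - v)) :=
          mul_le_mul_of_nonneg_right hmuε (hQnn _)
      _ ≤ normQ Q (P₁ (Ψ u) - P₁ (Ψ v)) := hlow
  -- main induction
  intro x y hx hy hcone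
  have H : ∀ n : ℕ,
      normQ Q (P₂ (Ψ^[n] x) - P₂ (Ψ^[n] y)) ≤ normQ Q (P₁ (Ψ^[n] x) - P₁ (Ψ^[n] y)) ∧
      (lam - 2 * ε) ^ n * normQ Q (P₁ x - P₁ y) ≤
        normQ Q (P₁ (Ψ^[n] x) - P₁ (Ψ^[n] y)) := by
    intro n
    induction n with
    | zero => simpa using hcone
    | succ n ih =>
      have hs := step (Ψ^[n] x) (Ψ^[n] y) (hx n) (hy n) ih.1
      rw [Function.iterate_succ_apply', Function.iterate_succ_apply']
      refine ⟨hs.2, ?_⟩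
      calc (lam - 2 * ε) ^ (n + 1) * normQ Q (P₁ x - P₁ y)
          = (lam - 2 * ε) * ((lam - 2 * ε) ^ n * normQ Q (P₁ x - P₁ y)) := by ring
        _ ≤ (lam - 2 * ε) * normQ Q (P₁ (Ψ^[n] x) - P₁ (Ψ^[n] y)) :=
            mul_le_mul_of_nonneg_left ih.2 hcpos.le
        _ ≤ normQ Q (P₁ (Ψ (Ψ^[n] x)) - P₁ (Ψ (Ψ^[n] y))) := hs.1
  intro n _
  rw [map_sub]
  exact (H n).2
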